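/- arXiv:2202.00074 — 2 statements merged into one kernel-verified Lean document; each statement's English description precedes it below -/
import Mathlib

section
/- For any 1/2 ≤ p ≤ 1, λ > 0 and x > 0, the tail integral satisfies (e^{-λx^p}/(λpx^{p-1}))·(1 + (1-p)/(λpx^p) + (1-p)(1-2p)/(λpx^p)^2) ≤ ∫_x^∞ e^{-λt^p} dt ≤ (e^{-λx^p}/(λpx^{p-1}))·(1 + (1-p)/(λpx^p)). -/
/-!
With `J(s) = ∫_x^∞ t^s e^{-λ t^p} dt`, integrating `(t^{s+1-p} e^{-λ t^p})'` over `(x, ∞)` gives the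
reduction formula `λ p J(s) = x^{s+1-p} e^{-λ x^p} + (s+1-p) J(s-p)`. Iterating it from `s = 0`
expands `J(0)` with an exact remainder: after two steps the remainder is
`(1-p)(1-2p)/(λp)^2 · J(-2p) ≤ 0`, after three it is `(1-p)(1-2p)(1-3p)/(λp)^3 · J(-3p) ≥ 0`,
both signs holding for `1/2 ≤ p ≤ 1`.
-/

open Real MeasureTheory Filter Set Topology

noncomputable def tailMoment (b p x s : ℝ) : ℝ := ∫ t in Ioi x, t ^ s * exp (-b * t ^ p)

section TailMoments

variable {b p : ℝ}

theorem tendsto_rpow_mul_exp_neg_mul_rpow_atTop_nhds_zero (s : ℝ) (hb : 0 < b) (hp : 0 < p) :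
    Tendsto (fun t : ℝ => t ^ s * exp (-b * t ^ p)) atTop (𝓝 0) := by
  refine ((tendsto_rpow_mul_exp_neg_mul_atTop_nhds_zero (s / p) b hb).comp
    (tendsto_rpow_atTop hp)).congr' ?_
  filter_upwards [eventually_gt_atTop 0] with t ht
  rw [Function.comp_apply, ← rpow_mul ht.le, mul_div_cancel₀ s hp.ne']

theorem integrableOn_Ioi_rpow_mul_exp_neg_mul_rpow (s : ℝ) (hb : 0 < b) (hp : 0 < p) {x : ℝ}
    (hx : 0 < x) : IntegrableOn (fun t : ℝ => t ^ s * exp (-b * t ^ p)) (Ioi x) := by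
  -- away from `0`, `t ^ s ≤ x ^ (s - |s|) * t ^ |s|` trades `s` for the nonnegative exponent `|s|`
  have hint : IntegrableOn (fun t : ℝ => x ^ (s - |s|) * (t ^ |s| * exp (-b * t ^ p))) (Ioi x) :=
    ((integrableOn_rpow_mul_exp_neg_mul_rpow (by linarith [abs_nonneg s]) hp hb).mono_set
      (Ioi_subset_Ioi hx.le)).const_mul _
  refine hint.mono' (by fun_prop) ?_
  filter_upwards [ae_restrict_mem measurableSet_Ioi] with t (ht : x < t)
  have ht0 : 0 < t := hx.trans ht
  have hle : t ^ (s - |s|) ≤ x ^ (s - |s|) :=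
    rpow_le_rpow_of_nonpos hx ht.le (by linarith [le_abs_self s])
  calc ‖t ^ s * exp (-b * t ^ p)‖ = t ^ (s - |s|) * (t ^ |s| * exp (-b * t ^ p)) := by
        rw [norm_of_nonneg (by positivity), ← mul_assoc, ← rpow_add ht0, sub_add_cancel]
    _ ≤ x ^ (s - |s|) * (t ^ |s| * exp (-b * t ^ p)) := by gcongr

theorem hasDerivAt_rpow_mul_exp_neg_mul_rpow (q : ℝ) {t : ℝ} (ht : 0 < t) :
    HasDerivAt (fun s : ℝ => s ^ q * exp (-b * s ^ p))
      (q * t ^ (q - 1) * exp (-b * t ^ p) - b * p * (t ^ (q + p - 1) * exp (-b * t ^ p))) t := by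
  have hpow : HasDerivAt (fun s : ℝ => s ^ p) (p * t ^ (p - 1)) t :=
    hasDerivAt_rpow_const (Or.inl ht.ne')
  refine ((hasDerivAt_rpow_const (Or.inl ht.ne')).mul (hpow.const_mul (-b)).exp).congr_deriv ?_
  rw [show q + p - 1 = (p - 1) + q by ring, rpow_add ht]
  ring

theorem tailMoment_recurrence (s : ℝ) (hb : 0 < b) (hp : 0 < p)
    {x : ℝ} (hx : 0 < x) :
    b * p * tailMoment b p x s =
      x ^ (s + 1 - p) * exp (-b * x ^ p) + (s + 1 - p) * tailMoment b p x (s - p) := by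
  have hderiv : ∀ t ∈ Ici x, HasDerivAt (fun t : ℝ => t ^ (s + 1 - p) * exp (-b * t ^ p))
      ((s + 1 - p) * (t ^ (s - p) * exp (-b * t ^ p)) - b * p * (t ^ s * exp (-b * t ^ p))) t := by
    intro t ht
    convert hasDerivAt_rpow_mul_exp_neg_mul_rpow (b := b) (p := p) (s + 1 - p)
      (hx.trans_le ht) using 1
    ring_nf
  have hint (r : ℝ) := integrableOn_Ioi_rpow_mul_exp_neg_mul_rpow r hb hp hx
  have hftc := integral_Ioi_of_hasDerivAt_of_tendsto' hderiv
    (((hint _).const_mul _).sub ((hint _).const_mul _))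
    (tendsto_rpow_mul_exp_neg_mul_rpow_atTop_nhds_zero _ hb hp)
  rw [integral_sub ((hint _).const_mul _) ((hint _).const_mul _), integral_const_mul,
    integral_const_mul] at hftc
  rw [tailMoment, tailMoment]
  linarith

theorem tailMoment_nonneg (s : ℝ) {x : ℝ} (hx : 0 ≤ x) : 0 ≤ tailMoment b p x s :=
  setIntegral_nonneg measurableSet_Ioi fun t (ht : x < t) => by
    have := hx.trans ht.le
    positivity

theorem tailMoment_zero_eq_two_terms_add (hb : 0 < b) (hp : 0 < p) {x : ℝ} (hx : 0 < x) :
    tailMoment b p x 0 = exp (-b * x ^ p) / (b * p * x ^ (p - 1)) *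
        (1 + (1 - p) / (b * p * x ^ p)) +
      (1 - p) * (1 - 2 * p) / (b * p) ^ 2 * tailMoment b p x (-p - p) := by
  have h₀ := tailMoment_recurrence 0 hb hp hx
  have h₁ := tailMoment_recurrence (-p) hb hp hx
  have hbp : b * p ≠ 0 := by positivity
  have hxp : x ^ p ≠ 0 := by positivity
  simp only [rpow_add hx, rpow_sub hx, rpow_neg hx.le, rpow_zero, rpow_one, zero_sub] at h₀ h₁ ⊢
  linear_combination (norm := skip) (b * p)⁻¹ * h₀ + (1 - p) * (b * p)⁻¹ ^ 2 * h₁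
  field_simp
  ring

theorem tailMoment_zero_eq_three_terms_add (hb : 0 < b) (hp : 0 < p) {x : ℝ} (hx : 0 < x) :
    tailMoment b p x 0 = exp (-b * x ^ p) / (b * p * x ^ (p - 1)) *
        (1 + (1 - p) / (b * p * x ^ p) + (1 - p) * (1 - 2 * p) / (b * p * x ^ p) ^ 2) +
      (1 - p) * (1 - 2 * p) * (1 - 3 * p) / (b * p) ^ 3 * tailMoment b p x (-p - p - p) := by
  have h₂ := tailMoment_recurrence (-p - p) hb hp hx
  have hbp : b * p ≠ 0 := by positivity
  have hxp : x ^ p ≠ 0 := by positivity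
  rw [tailMoment_zero_eq_two_terms_add hb hp hx]
  simp only [rpow_add hx, rpow_sub hx, rpow_neg hx.le, rpow_one] at h₂ ⊢
  linear_combination (norm := skip) (1 - p) * (1 - 2 * p) * (b * p)⁻¹ ^ 3 * h₂
  field_simp
  ring

end TailMoments

theorem exp_power_tail_bounds_half (p lam x : ℝ) (hp1 : 1 / 2 ≤ p) (hp2 : p ≤ 1)
    (hlam : 0 < lam) (hx : 0 < x) :
    (Real.exp (-lam * x ^ p) / (lam * p * x ^ (p - 1))) *
        (1 + (1 - p) / (lam * p * x ^ p) + (1 - p) * (1 - 2 * p) / (lam * p * x ^ p) ^ 2)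
      ≤ ∫ t in Set.Ioi x, Real.exp (-lam * t ^ p) ∧
    ∫ t in Set.Ioi x, Real.exp (-lam * t ^ p)
      ≤ (Real.exp (-lam * x ^ p) / (lam * p * x ^ (p - 1))) * (1 + (1 - p) / (lam * p * x ^ p)) := by
  have hp : 0 < p := by linarith
  have hcoeff₂ : (1 - p) * (1 - 2 * p) ≤ 0 := by nlinarith
  have hcoeff₃ : 0 ≤ (1 - p) * (1 - 2 * p) * (1 - 3 * p) := by
    nlinarith [mul_nonneg (sub_nonneg.2 hp2) (by linarith : 0 ≤ 2 * p - 1)]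
  have hrem₂ : (1 - p) * (1 - 2 * p) / (lam * p) ^ 2 * tailMoment lam p x (-p - p) ≤ 0 :=
    mul_nonpos_of_nonpos_of_nonneg (div_nonpos_of_nonpos_of_nonneg hcoeff₂ (by positivity))
      (tailMoment_nonneg _ hx.le)
  have hrem₃ : 0 ≤ (1 - p) * (1 - 2 * p) * (1 - 3 * p) / (lam * p) ^ 3 *
      tailMoment lam p x (-p - p - p) :=
    mul_nonneg (div_nonneg hcoeff₃ (by positivity)) (tailMoment_nonneg _ hx.le)
  rw [show ∫ t in Ioi x, exp (-lam * t ^ p) = tailMoment lam p x 0 by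
    simp only [tailMoment, rpow_zero, one_mul]]
  constructor
  · rw [tailMoment_zero_eq_three_terms_add hlam hp hx]
    linarith
  · rw [tailMoment_zero_eq_two_terms_add hlam hp hx]
    linarith
end

section
/- Let T(z) = γ·tan(π·Φ⁰(z) - π/2) be the transport map pushing the standard normal to the Cauchy distribution with scale γ. Then T(z) ~ γ z e^{z²/2}/√(π/2) as z → ∞. -/
open Real MeasureTheory Filter

/-- The standard normal cumulative distribution function. -/
noncomputable def stdNormalCDF (z : ℝ) : ℝ :=
  ∫ t in Set.Iic z, (1 / Real.sqrt (2 * Real.pi)) * Real.exp (-t ^ 2 / 2)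

/-!
With the Gaussian tail `Q z = ∫_z^∞ exp (-t²/2) dt` one has
`π Φ(z) - π/2 = π/2 - √(π/2) Q z`, hence `T z = γ cot (√(π/2) Q z)`. Since `Q z → 0⁺` and
`cot x ~ 1/x` as `x → 0⁺`, it suffices to know the Mills ratio asymptotics
`Q z ~ exp (-z²/2) / z`. These follow by squeezing: comparing `Q z` with the explicit integrals
`∫_z^∞ t exp (-t²/2) dt = exp (-z²/2)` and `∫_z^∞ (1 + t⁻²) exp (-t²/2) dt = exp (-z²/2) / z`
gives `(1 + z⁻²)⁻¹ ≤ z exp (z²/2) Q z ≤ 1` for `z > 0`.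
-/

open Set Topology

noncomputable def gaussTail (z : ℝ) : ℝ := ∫ t in Ioi z, exp (-t ^ 2 / 2)

lemma integrable_exp_neg_sq_div_two : Integrable fun t : ℝ => exp (-t ^ 2 / 2) := by
  simpa [neg_div, div_eq_inv_mul] using integrable_exp_neg_mul_sq (b := 1 / 2) (by norm_num)

lemma integral_exp_neg_sq_div_two : ∫ t : ℝ, exp (-t ^ 2 / 2) = √(2 * π) := by
  simpa [neg_div, div_eq_inv_mul] using integral_gaussian (1 / 2)

lemma stdNormalCDF_eq_one_sub_gaussTail (z : ℝ) :
    stdNormalCDF z = 1 - gaussTail z / √(2 * π) := by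
  have hsplit := intervalIntegral.integral_Iic_add_Ioi (b := z)
    integrable_exp_neg_sq_div_two.integrableOn integrable_exp_neg_sq_div_two.integrableOn
  rw [integral_exp_neg_sq_div_two] at hsplit
  have hpos : 0 < √(2 * π) := by positivity
  rw [stdNormalCDF, integral_const_mul, gaussTail, eq_sub_iff_add_eq, one_div, inv_mul_eq_div,
    ← add_div, hsplit, div_self hpos.ne']

lemma gaussTail_pos (z : ℝ) : 0 < gaussTail z := by
  have : NeZero (volume.restrict (Ioi z)) := ⟨by simp⟩
  exact integral_exp_pos integrable_exp_neg_sq_div_two.integrableOn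

lemma tendsto_gaussTail_atTop : Tendsto gaussTail atTop (𝓝 0) :=
  tendsto_integral_Ioi_zero tendsto_id

lemma tendsto_exp_neg_sq_div_two_atTop :
    Tendsto (fun t : ℝ => exp (-t ^ 2 / 2)) atTop (𝓝 0) := by
  simp only [neg_div]
  exact tendsto_exp_atBot.comp <| tendsto_neg_atTop_atBot.comp <|
    (tendsto_pow_atTop two_ne_zero).atTop_div_const two_pos

lemma hasDerivAt_neg_exp_neg_sq_div_two (t : ℝ) :
    HasDerivAt (fun t => -exp (-t ^ 2 / 2)) (t * exp (-t ^ 2 / 2)) t :=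
  (((hasDerivAt_id' t).pow 2).neg.div_const 2).exp.neg.congr_deriv
    (by simp only [Pi.neg_apply, Pi.pow_apply]; ring)

lemma hasDerivAt_neg_exp_neg_sq_div_two_div {t : ℝ} (ht : t ≠ 0) :
    HasDerivAt (fun t => -exp (-t ^ 2 / 2) / t) ((1 + t⁻¹ ^ 2) * exp (-t ^ 2 / 2)) t := by
  refine ((hasDerivAt_neg_exp_neg_sq_div_two t).div (hasDerivAt_id' t) ht).congr_deriv ?_
  field_simp
  ring

lemma mul_gaussTail_le_exp {z : ℝ} (hz : 0 < z) : z * gaussTail z ≤ exp (-z ^ 2 / 2) := by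
  have hderiv : ∀ t ∈ Ici z, HasDerivAt (fun t => -exp (-t ^ 2 / 2)) (t * exp (-t ^ 2 / 2)) t :=
    fun t _ => hasDerivAt_neg_exp_neg_sq_div_two t
  have hnonneg : ∀ t ∈ Ioi z, 0 ≤ t * exp (-t ^ 2 / 2) :=
    fun t ht => mul_nonneg (hz.trans ht).le (exp_pos _).le
  have hlim := tendsto_exp_neg_sq_div_two_atTop.neg
  rw [neg_zero] at hlim
  calc z * gaussTail z = ∫ t in Ioi z, z * exp (-t ^ 2 / 2) := (integral_const_mul _ _).symm
    _ ≤ ∫ t in Ioi z, t * exp (-t ^ 2 / 2) :=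
      setIntegral_mono_on (integrable_exp_neg_sq_div_two.integrableOn.const_mul z)
        (integrableOn_Ioi_deriv_of_nonneg' hderiv hnonneg hlim) measurableSet_Ioi
        fun t ht => mul_le_mul_of_nonneg_right ht.le (exp_pos _).le
    _ = exp (-z ^ 2 / 2) := by
      rw [integral_Ioi_of_hasDerivAt_of_nonneg' hderiv hnonneg hlim, zero_sub, neg_neg]

lemma exp_div_le_one_add_inv_sq_mul_gaussTail {z : ℝ} (hz : 0 < z) :
    exp (-z ^ 2 / 2) / z ≤ (1 + z⁻¹ ^ 2) * gaussTail z := by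
  have hderiv : ∀ t ∈ Ici z, HasDerivAt (fun t => -exp (-t ^ 2 / 2) / t)
      ((1 + t⁻¹ ^ 2) * exp (-t ^ 2 / 2)) t :=
    fun t ht => hasDerivAt_neg_exp_neg_sq_div_two_div (hz.trans_le ht).ne'
  have hnonneg : ∀ t ∈ Ioi z, 0 ≤ (1 + t⁻¹ ^ 2) * exp (-t ^ 2 / 2) :=
    fun t _ => by positivity
  have hlim : Tendsto (fun t => -exp (-t ^ 2 / 2) / t) atTop (𝓝 0) := by
    simpa [neg_div, div_eq_mul_inv] using
      tendsto_exp_neg_sq_div_two_atTop.neg.mul tendsto_inv_atTop_zero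
  calc exp (-z ^ 2 / 2) / z = ∫ t in Ioi z, (1 + t⁻¹ ^ 2) * exp (-t ^ 2 / 2) := by
        rw [integral_Ioi_of_hasDerivAt_of_nonneg' hderiv hnonneg hlim]; ring
    _ ≤ ∫ t in Ioi z, (1 + z⁻¹ ^ 2) * exp (-t ^ 2 / 2) :=
      setIntegral_mono_on (integrableOn_Ioi_deriv_of_nonneg' hderiv hnonneg hlim)
        (integrable_exp_neg_sq_div_two.integrableOn.const_mul _) measurableSet_Ioi
        fun t ht => by
          have := inv_anti₀ hz ht.le
          gcongr
          exact (inv_pos.2 (hz.trans ht)).le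
    _ = (1 + z⁻¹ ^ 2) * gaussTail z := integral_const_mul _ _

theorem tendsto_mul_exp_mul_gaussTail :
    Tendsto (fun z => z * exp (z ^ 2 / 2) * gaussTail z) atTop (𝓝 1) := by
  have hexp (z : ℝ) : exp (-z ^ 2 / 2) = (exp (z ^ 2 / 2))⁻¹ := by rw [neg_div, exp_neg]
  have hlower : Tendsto (fun z : ℝ => (1 + z⁻¹ ^ 2)⁻¹) atTop (𝓝 1) := by
    simpa using ((tendsto_inv_atTop_zero (𝕜 := ℝ)).pow 2 |>.const_add 1).inv₀ (by norm_num)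
  refine tendsto_of_tendsto_of_tendsto_of_le_of_le' hlower tendsto_const_nhds ?_ ?_
  · filter_upwards [eventually_gt_atTop 0] with z hz
    have hbound := exp_div_le_one_add_inv_sq_mul_gaussTail hz
    rw [hexp] at hbound
    rw [inv_le_iff_one_le_mul₀ (by positivity)]
    calc 1 = z * exp (z ^ 2 / 2) * ((exp (z ^ 2 / 2))⁻¹ / z) := by field_simp
      _ ≤ z * exp (z ^ 2 / 2) * ((1 + z⁻¹ ^ 2) * gaussTail z) := by gcongr
      _ = z * exp (z ^ 2 / 2) * gaussTail z * (1 + z⁻¹ ^ 2) := by ring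
  · filter_upwards [eventually_gt_atTop 0] with z hz
    have hbound := mul_gaussTail_le_exp hz
    rw [hexp] at hbound
    calc z * exp (z ^ 2 / 2) * gaussTail z = exp (z ^ 2 / 2) * (z * gaussTail z) := by ring
      _ ≤ exp (z ^ 2 / 2) * (exp (z ^ 2 / 2))⁻¹ := by gcongr
      _ = 1 := mul_inv_cancel₀ (exp_pos _).ne'

lemma tendsto_tan_div_self : Tendsto (fun x => tan x / x) (𝓝[≠] 0) (𝓝 1) := by
  have h : HasDerivAt tan 1 0 := by simpa using hasDerivAt_tan (x := 0) (by simp)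
  refine h.tendsto_slope.congr fun x => ?_
  simp [slope_def_field]

theorem cauchy_transport_asymptotics (γ : ℝ) (hγ : 0 < γ)
    (T : ℝ → ℝ) (hT : ∀ z, T z = γ * Real.tan (Real.pi * stdNormalCDF z - Real.pi / 2)) :
    Tendsto (fun z => T z / (γ * z * Real.exp (z ^ 2 / 2) / Real.sqrt (Real.pi / 2)))
      atTop (nhds 1) := by
  set u : ℝ → ℝ := fun z => √(π / 2) * gaussTail z with hu_def
  have hpi : π / √(2 * π) = √(π / 2) := by
    rw [div_eq_iff (by positivity), ← sqrt_mul (by positivity),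
      show π / 2 * (2 * π) = π ^ 2 by ring, sqrt_sq pi_pos.le]
  have hTu (z : ℝ) : T z = γ * (tan (u z))⁻¹ := by
    rw [hT, stdNormalCDF_eq_one_sub_gaussTail, ← tan_pi_div_two_sub, hu_def, ← hpi]
    ring_nf
  have hu : Tendsto u atTop (𝓝[≠] 0) := by
    refine tendsto_nhdsWithin_iff.2 ⟨?_, Eventually.of_forall fun z => ?_⟩
    · simpa only [mul_zero] using tendsto_gaussTail_atTop.const_mul √(π / 2)
    · exact (mul_pos (by positivity) (gaussTail_pos z)).ne'
  have hlim : Tendsto (fun z => (tan (u z) / u z)⁻¹ / (z * exp (z ^ 2 / 2) * gaussTail z))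
      atTop (𝓝 1) := by
    simpa only [inv_one, div_one, Pi.div_def, Function.comp_apply] using
      ((tendsto_tan_div_self.comp hu).inv₀ one_ne_zero).div tendsto_mul_exp_mul_gaussTail
        one_ne_zero
  refine hlim.congr' ?_
  filter_upwards [eventually_gt_atTop 0] with z hz
  have hQ := gaussTail_pos z
  rw [hTu, hu_def]
  field_simp
end
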